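/- For d = 1 or 2, γ > 0, and k ∈ T^d such that E_{γ,k} is nonconstant, the integral ∫_{T^d} η(dq)/(E_max(k) - E_{γ,k}(q)) diverges to +∞, where E_max(k) = max_q E_{γ,k}(q). -/

import Mathlib

open MeasureTheory Real

instance : Fact (0 < 2 * π) := ⟨by positivity⟩

/-- Equip the circle `ℝ/2πℤ` with its Haar measure. -/
noncomputable instance : MeasureSpace Real.Angle :=
  inferInstanceAs (MeasureSpace (AddCircle (2 * π)))

instance : SigmaFinite (volume : Measure Real.Angle) :=
  inferInstanceAs (SigmaFinite (volume : Measure (AddCircle (2 * π))))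

/-- The lattice dispersion relation `ε(p) = 2∑ᵢ (1 - cos pⁱ)` on the torus `T^d`. -/
noncomputable def eps (d : ℕ) (p : Fin d → Real.Angle) : ℝ :=
  2 * ∑ i, (1 - (p i).cos)

/-- The normalized Haar measure `η` on the torus `T^d`. -/
noncomputable def haarT (d : ℕ) : Measure (Fin d → Real.Angle) :=
  (ENNReal.ofReal ((2 * π) ^ d))⁻¹ • volume

/-- The two-particle dispersion `E_{γ,k}(q) = ε(q) + γ ε(k - q)`. -/
noncomputable def E2 (d : ℕ) (γ : ℝ) (k q : Fin d → Real.Angle) : ℝ :=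
  eps d q + γ * eps d (k - q)

/-! In each coordinate `E_{γ,k}` is a constant plus a harmonic `r cos (θ - ψ)` with `r ≥ 0`, so
`E_max(k) - E_{γ,k}(q) = ∑ᵢ rᵢ (1 - cos (qᵢ - ψᵢ))`. This gap vanishes only on a null set and is
at most `C |q - ψ|²`. On the dyadic shell `2⁻ⁿ⁻¹ < |q - ψ| ≤ 2⁻ⁿ`, of volume `≍ 2⁻ⁿᵈ`, the integrand
is at least `4ⁿ / C`, so for `d ≤ 2` every shell contributes at least `1 / C`. -/

open scoped ENNReal

instance : BorelSpace Real.Angle :=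
  inferInstanceAs (BorelSpace (AddCircle (2 * π)))

instance : SecondCountableTopology Real.Angle :=
  inferInstanceAs (SecondCountableTopology (AddCircle (2 * π)))

namespace Real.Angle

theorem norm_eq_abs_toReal (θ : Angle) : ‖θ‖ = |θ.toReal| := by
  conv_lhs => rw [← coe_toReal θ]
  change ‖(θ.toReal : AddCircle (2 * π))‖ = _
  rw [AddCircle.norm_coe_eq_abs_iff _ two_pi_pos.ne', abs_of_pos two_pi_pos, abs_le]
  constructor <;> linarith [neg_pi_lt_toReal θ, toReal_le_pi θ]

theorem one_sub_cos_le_sq_norm_div_two (θ : Angle) : 1 - cos θ ≤ ‖θ‖ ^ 2 / 2 := by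
  rw [norm_eq_abs_toReal, sq_abs, ← cos_toReal]
  linarith [Real.one_sub_sq_div_two_le_cos (x := θ.toReal)]

theorem cos_le_one (θ : Angle) : cos θ ≤ 1 := by
  rw [← cos_toReal]
  exact Real.cos_le_one _

theorem one_sub_cos_nonneg (θ : Angle) : 0 ≤ 1 - cos θ :=
  sub_nonneg.2 (cos_le_one θ)

theorem one_sub_cos_pos {θ : Angle} (hθ : θ ≠ 0) : 0 < 1 - cos θ := by
  refine sub_pos.2 ((cos_le_one θ).lt_of_ne fun h => hθ ?_)
  rw [← cos_zero, cos_eq_iff_eq_or_eq_neg, neg_zero, or_self] at h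
  exact h

theorem cos_sub (θ ψ : Angle) : cos (θ - ψ) = cos θ * cos ψ + sin θ * sin ψ := by
  rw [sub_eq_add_neg, cos_add, cos_neg, sin_neg, mul_neg, sub_neg_eq_add]

theorem exists_mul_cos_add_mul_sin_eq (a b : ℝ) :
    ∃ r ψ, 0 ≤ r ∧ ∀ θ : Angle, a * cos θ + b * sin θ = r * cos (θ - ψ) := by
  set z : ℂ := ⟨a, b⟩
  refine ⟨‖z‖, z.arg, norm_nonneg z, fun θ => ?_⟩
  rw [cos_sub, cos_coe, sin_coe]
  linear_combination (-cos θ) * Complex.norm_mul_cos_arg z - sin θ * Complex.norm_mul_sin_arg z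

theorem volume_closedBall (ψ : Angle) {ε : ℝ} (hε : ε ≤ π) :
    volume (Metric.closedBall ψ ε) = ENNReal.ofReal (2 * ε) := by
  have h := AddCircle.volume_closedBall (T := 2 * π) (x := show AddCircle (2 * π) from ψ) ε
  rwa [min_eq_right (by linarith)] at h

instance : NullSingletonClass (volume : Measure Angle) :=
  ⟨fun ψ => by rw [← Metric.closedBall_zero, volume_closedBall ψ pi_pos.le]; simp⟩

theorem volume_pi_closedBall {d : ℕ} (ψ : Fin d → Angle) {ε : ℝ} (hε₀ : 0 ≤ ε) (hε : ε ≤ π) :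
    volume (Metric.closedBall ψ ε) = ENNReal.ofReal ((2 * ε) ^ d) := by
  rw [volume_pi, Measure.pi_closedBall _ _ hε₀]
  simp [volume_closedBall _ hε, ENNReal.ofReal_pow (by positivity : (0 : ℝ) ≤ 2 * ε)]

theorem ofReal_le_volume_pi_closedBall_sdiff {d : ℕ} (ψ : Fin d → Angle) {ε : ℝ} (hε₀ : 0 ≤ ε)
    (hε : ε ≤ π) :
    ENNReal.ofReal ((2 ^ d - 1) * ε ^ d) ≤
      volume (Metric.closedBall ψ ε \ Metric.closedBall ψ (ε / 2)) := by
  calc ENNReal.ofReal ((2 ^ d - 1) * ε ^ d)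
      = volume (Metric.closedBall ψ ε) - volume (Metric.closedBall ψ (ε / 2)) := by
        rw [volume_pi_closedBall ψ hε₀ hε, volume_pi_closedBall ψ (by positivity) (by linarith),
          ← ENNReal.ofReal_sub _ (by positivity)]
        congr 1
        ring
    _ ≤ _ := le_measure_sdiff

end Real.Angle

theorem lintegral_eq_top_of_le_setLIntegral_sdiff {α : Type*} [MeasurableSpace α]
    {μ : Measure α} {f : α → ℝ≥0∞} {s : ℕ → Set α} (hs : Antitone s)
    (hsm : ∀ n, MeasurableSet (s n)) {c : ℝ≥0∞} (hc : c ≠ 0)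
    (h : ∀ n, c ≤ ∫⁻ x in s n \ s (n + 1), f x ∂μ) :
    ∫⁻ x, f x ∂μ = ⊤ := by
  have hdisj : Pairwise (Function.onFun Disjoint fun n => s n \ s (n + 1)) :=
    (pairwise_disjoint_on _).2 fun m n hmn =>
      Set.disjoint_left.2 fun x hm hn => hm.2 (hs (Nat.succ_le_of_lt hmn) hn.1)
  refine top_unique ?_
  calc ⊤ = ∑' _ : ℕ, c := (ENNReal.tsum_const_eq_top_of_ne_zero hc).symm
    _ ≤ ∑' n, ∫⁻ x in s n \ s (n + 1), f x ∂μ := ENNReal.tsum_le_tsum h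
    _ = ∫⁻ x in ⋃ n, s n \ s (n + 1), f x ∂μ :=
      (lintegral_iUnion (fun n => (hsm n).diff (hsm (n + 1))) hdisj f).symm
    _ ≤ ∫⁻ x, f x ∂μ := setLIntegral_le_lintegral _ _

theorem Real.Angle.lintegral_ofReal_inv_eq_top {d : ℕ} (hd₀ : d ≠ 0) (hd : d ≤ 2)
    {g : (Fin d → Angle) → ℝ} {ψ : Fin d → Angle} {C : ℝ} (hC : 0 < C)
    (hg : ∀ q, g q ≤ C * dist q ψ ^ 2) (hpos : ∀ᵐ q, 0 < g q) :
    ∫⁻ q, ENNReal.ofReal (g q)⁻¹ = ⊤ := by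
  set s : ℕ → Set (Fin d → Angle) := fun n => Metric.closedBall ψ (2⁻¹ ^ n)
  have hsm (n : ℕ) : MeasurableSet (s n) := Metric.isClosed_closedBall.measurableSet
  have hs : Antitone s := antitone_nat_of_succ_le fun n =>
    Metric.closedBall_subset_closedBall
      (pow_le_pow_of_le_one (by norm_num) (by norm_num) n.le_succ)
  refine lintegral_eq_top_of_le_setLIntegral_sdiff hs hsm (c := ENNReal.ofReal C⁻¹)
    (by simpa using hC) fun n => ?_
  set ε : ℝ := 2⁻¹ ^ n
  have hε₀ : 0 < ε := by positivity
  have hε₁ : ε ≤ 1 := pow_le_one₀ (by norm_num) (by norm_num)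
  have hvol : ENNReal.ofReal (ε ^ 2) ≤ volume (s n \ s (n + 1)) := by
    have h2d : (2 : ℝ) ≤ 2 ^ d := le_self_pow₀ one_le_two hd₀
    calc ENNReal.ofReal (ε ^ 2) ≤ ENNReal.ofReal ((2 ^ d - 1) * ε ^ d) := by
          gcongr
          calc ε ^ 2 ≤ ε ^ d := pow_le_pow_of_le_one hε₀.le hε₁ hd
            _ ≤ (2 ^ d - 1) * ε ^ d := le_mul_of_one_le_left (by positivity) (by linarith)
      _ ≤ volume (s n \ s (n + 1)) := by
          have hs_succ : s (n + 1) = Metric.closedBall ψ (ε / 2) := by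
            simp only [s, ε, pow_succ, div_eq_mul_inv]
          rw [hs_succ]
          exact ofReal_le_volume_pi_closedBall_sdiff ψ hε₀.le
            (hε₁.trans (by linarith [pi_gt_three]))
  have hf : ∀ᵐ q, q ∈ s n \ s (n + 1) →
      ENNReal.ofReal (C * ε ^ 2)⁻¹ ≤ ENNReal.ofReal (g q)⁻¹ := by
    filter_upwards [hpos] with q hq hqs
    refine ENNReal.ofReal_le_ofReal (inv_anti₀ hq ((hg q).trans ?_))
    gcongr
    exact Metric.mem_closedBall.1 hqs.1
  calc ENNReal.ofReal C⁻¹ = ENNReal.ofReal (C * ε ^ 2)⁻¹ * ENNReal.ofReal (ε ^ 2) := by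
        rw [← ENNReal.ofReal_mul (by positivity)]
        field_simp
    _ ≤ ENNReal.ofReal (C * ε ^ 2)⁻¹ * volume (s n \ s (n + 1)) := by gcongr
    _ = ∫⁻ _ in s n \ s (n + 1), ENNReal.ofReal (C * ε ^ 2)⁻¹ := (setLIntegral_const _ _).symm
    _ ≤ ∫⁻ q in s n \ s (n + 1), ENNReal.ofReal (g q)⁻¹ :=
        setLIntegral_mono_ae' ((hsm n).diff (hsm (n + 1))) hf

theorem sum_mul_one_sub_cos_sub_le {d : ℕ} {r : Fin d → ℝ} (hr : ∀ i, 0 ≤ r i)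
    (q ψ : Fin d → Real.Angle) :
    ∑ i, r i * (1 - (q i - ψ i).cos) ≤ (∑ i, r i) / 2 * dist q ψ ^ 2 := by
  rw [Finset.sum_div, Finset.sum_mul]
  refine Finset.sum_le_sum fun i _ => ?_
  calc r i * (1 - (q i - ψ i).cos) ≤ r i * (dist (q i) (ψ i) ^ 2 / 2) := by
        rw [dist_eq_norm]
        exact mul_le_mul_of_nonneg_left (Real.Angle.one_sub_cos_le_sq_norm_div_two _) (hr i)
    _ ≤ r i / 2 * dist q ψ ^ 2 := by
        have := dist_le_pi_dist q ψ i
        rw [mul_div_assoc', div_mul_eq_mul_div]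
        gcongr
        exact hr i

theorem ae_sum_mul_one_sub_cos_sub_pos {d : ℕ} {r : Fin d → ℝ} (hr : ∀ i, 0 ≤ r i) {i₀ : Fin d}
    (hi₀ : 0 < r i₀) (ψ : Fin d → Real.Angle) :
    ∀ᵐ q : Fin d → Real.Angle, 0 < ∑ i, r i * (1 - (q i - ψ i).cos) := by
  rw [volume_pi]
  filter_upwards [Measure.ae_eval_ne _ i₀ (ψ i₀)] with q hq
  calc 0 < r i₀ * (1 - (q i₀ - ψ i₀).cos) :=
        mul_pos hi₀ (Real.Angle.one_sub_cos_pos (sub_ne_zero.2 hq))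
    _ ≤ ∑ i, r i * (1 - (q i - ψ i).cos) :=
      Finset.single_le_sum (f := fun i => r i * (1 - (q i - ψ i).cos))
        (fun i _ => mul_nonneg (hr i) (Real.Angle.one_sub_cos_nonneg _)) (Finset.mem_univ i₀)

theorem exists_E2_eq_sub_sum_mul_one_sub_cos (d : ℕ) (γ : ℝ) (k : Fin d → Real.Angle) :
    ∃ (r : Fin d → ℝ) (ψ : Fin d → Real.Angle), (∀ i, 0 ≤ r i) ∧
      ∀ q, E2 d γ k q = ∑ i, (2 + 2 * γ + r i) - ∑ i, r i * (1 - (q i - ψ i).cos) := by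
  have key (s : Real.Angle) : ∃ r ψ, 0 ≤ r ∧ ∀ θ,
      2 * (1 - θ.cos) + γ * (2 * (1 - (s - θ).cos)) = 2 + 2 * γ + r - r * (1 - (θ - ψ).cos) := by
    obtain ⟨r, ψ, hr, h⟩ :=
      Real.Angle.exists_mul_cos_add_mul_sin_eq (-2 - 2 * γ * s.cos) (-2 * γ * s.sin)
    refine ⟨r, ψ, hr, fun θ => ?_⟩
    rw [Real.Angle.cos_sub s θ]
    linear_combination h θ
  choose r ψ hr h using fun i => key (k i)
  refine ⟨r, ψ, hr, fun q => ?_⟩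
  simp only [E2, eps, Pi.sub_apply, Finset.mul_sum, ← Finset.sum_add_distrib,
    ← Finset.sum_sub_distrib, h]

theorem stmt5_general (d : ℕ) (hd : d = 1 ∨ d = 2) (γ : ℝ)
    (k : Fin d → Real.Angle) (hnc : ∃ q q', E2 d γ k q ≠ E2 d γ k q') :
    ∫⁻ q, ENNReal.ofReal (sSup (Set.range (E2 d γ k)) - E2 d γ k q)⁻¹ ∂(haarT d) = ⊤ := by
  obtain ⟨r, ψ, hr, hE⟩ := exists_E2_eq_sub_sum_mul_one_sub_cos d γ k
  have hgap_nonneg (q : Fin d → Real.Angle) : 0 ≤ ∑ i, r i * (1 - (q i - ψ i).cos) :=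
    Finset.sum_nonneg fun i _ => mul_nonneg (hr i) (Real.Angle.one_sub_cos_nonneg _)
  have hsup : sSup (Set.range (E2 d γ k)) = ∑ i, (2 + 2 * γ + r i) := by
    refine IsGreatest.csSup_eq ⟨⟨ψ, by simp [hE]⟩, ?_⟩
    rintro _ ⟨q, rfl⟩
    exact hE q ▸ sub_le_self _ (hgap_nonneg q)
  obtain ⟨i₀, hi₀⟩ : ∃ i, 0 < r i := by
    by_contra! h
    obtain ⟨q, q', hne⟩ := hnc
    simp [hE, fun i => le_antisymm (h i) (hr i)] at hne
  have hdiv := Real.Angle.lintegral_ofReal_inv_eq_top (by omega) (by omega)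
    (half_pos (Finset.sum_pos' (fun i _ => hr i) ⟨i₀, Finset.mem_univ _, hi₀⟩))
    (sum_mul_one_sub_cos_sub_le hr · ψ) (ae_sum_mul_one_sub_cos_sub_pos hr hi₀ ψ)
  simp only [hsup, hE, sub_sub_cancel]
  rw [haarT, lintegral_smul_measure, hdiv, smul_eq_mul, ENNReal.mul_top (by simp)]

/-- for `d = 1, 2` and `E_{γ,k}` nonconstant, the integral
`∫ η(dq)/(E_max(k) - E_{γ,k}(q))` diverges to `+∞`. -/
theorem stmt5 (d : ℕ) (hd : d = 1 ∨ d = 2) (γ : ℝ) (hγ : 0 < γ)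
    (k : Fin d → Real.Angle) (hnc : ∃ q q', E2 d γ k q ≠ E2 d γ k q') :
    ∫⁻ q, ENNReal.ofReal (sSup (Set.range (E2 d γ k)) - E2 d γ k q)⁻¹ ∂(haarT d) = ⊤ :=
  stmt5_general d hd γ k hnc
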